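/- Functional Poincaré–Hopf theorem: let G be a finite simple graph on a finite vertex set V and let g : V → ℝ be injective. For every real t, f_G(t) = 1 + t · Σ_{v ∈ V} f_{S⁻(v)}(t), where S⁻(v) is the subgraph of G induced on { w : w adjacent to v and g(w) < g(v) }. -/

import Mathlib

/-- The cycle graph `C_n` on `Fin n`: `i ~ j` iff `i - j ≡ ±1 (mod n)`. -/
def cycleGraph (n : ℕ) : SimpleGraph (Fin n) where
  Adj i j := i ≠ j ∧ ((i - j : Fin n).val = 1 ∨ (j - i : Fin n).val = 1)
  symm := by
    refine ⟨?_⟩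
    intro i j h
    exact ⟨h.1.symm, h.2.symm⟩
  loopless := by
    refine ⟨?_⟩
    intro i h
    exact h.1 rfl

instance (n : ℕ) : DecidableRel (cycleGraph n).Adj :=
  fun a b => inferInstanceAs (Decidable (a ≠ b ∧ ((a - b : Fin n).val = 1 ∨ (b - a : Fin n).val = 1)))

/-- The path graph `P_n` on `Fin n`: `i ~ j` iff `|i - j| = 1`. -/
def pathGraph' (n : ℕ) : SimpleGraph (Fin n) where
  Adj i j := (i : ℕ) + 1 = (j : ℕ) ∨ (j : ℕ) + 1 = (i : ℕ)
  symm := by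
    refine ⟨?_⟩
    intro i j h
    exact h.symm
  loopless := by
    refine ⟨?_⟩
    intro i h
    rcases h with h | h <;> omega

instance (n : ℕ) : DecidableRel (pathGraph' n).Adj :=
  fun a b => inferInstanceAs (Decidable ((a : ℕ) + 1 = (b : ℕ) ∨ (b : ℕ) + 1 = (a : ℕ)))

/-- The finset of all nonempty cliques of a finite simple graph. -/
noncomputable def cliquesOf {V : Type*} [Finite V] (G : SimpleGraph V) : Finset (Finset V) := by
  classical
  letI : Fintype V := Fintype.ofFinite V
  exact Finset.univ.filter (fun s : Finset V => s.Nonempty ∧ G.IsClique (s : Set V))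

/-- The number of cliques with exactly `j` elements (the empty clique counting for `j = 0`). -/
noncomputable def cliqueCount {V : Type*} [Finite V] (G : SimpleGraph V) (j : ℕ) : ℕ := by
  classical
  letI : Fintype V := Fintype.ofFinite V
  exact (Finset.univ.filter (fun s : Finset V => G.IsClique (s : Set V) ∧ s.card = j)).card

/-- The Euler characteristic of the clique (Whitney) complex of `G`. -/
noncomputable def eulerChar {V : Type*} [Finite V] (G : SimpleGraph V) : ℤ :=
  ∑ c ∈ cliquesOf G, (-1 : ℤ) ^ (c.card + 1)

/-- The simplex generating function `f_G(t) = 1 + ∑_c t^{|c|}`. -/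
noncomputable def fgen {V : Type*} [Finite V] (G : SimpleGraph V) (t : ℝ) : ℝ :=
  1 + ∑ c ∈ cliquesOf G, t ^ c.card

lemma mem_cliquesOf {V : Type*} [Finite V] (G : SimpleGraph V) (c : Finset V) :
    c ∈ cliquesOf G ↔ c.Nonempty ∧ G.IsClique (c : Set V) := by
  simp [cliquesOf]

/-- Functional Poincaré–Hopf theorem: for an injective `g : V → ℝ`,
`f_G(t) = 1 + t ∑_v f_{S⁻(v)}(t)` where `S⁻(v)` is induced on the neighbors `w` of `v`
with `g(w) < g(v)`. -/
theorem functional_poincareHopf {V : Type*} [Fintype V] (G : SimpleGraph V) (g : V → ℝ)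
    (hg : Function.Injective g) (t : ℝ) :
    fgen G t =
      1 + t * ∑ v : V, fgen (G.induce {w : V | G.Adj v w ∧ g w < g v}) t := by
  classical
  set P : V → Set V := fun v => {w : V | G.Adj v w ∧ g w < g v} with hP
  -- per-vertex computation
  have key : ∀ v : V,
      ∑ c ∈ (cliquesOf G).filter (fun c => v ∈ c ∧ ∀ w ∈ c, g w ≤ g v), t ^ c.card
        = t * fgen (G.induce (P v)) t := by
    intro v
    have hemp : (∅ : Finset (P v)) ∉ cliquesOf (G.induce (P v)) := by
      simp [mem_cliquesOf]
    have hrhs : t * fgen (G.induce (P v)) t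
        = ∑ s ∈ insert (∅ : Finset (P v)) (cliquesOf (G.induce (P v))), t ^ (s.card + 1) := by
      rw [Finset.sum_insert hemp, fgen]
      simp [mul_add, Finset.mul_sum, pow_succ, mul_comm]
    rw [hrhs]
    refine Finset.sum_bij' (fun c _ => Finset.subtype (· ∈ P v) (c.erase v))
      (fun s _ => insert v (s.map (Function.Embedding.subtype (· ∈ P v)))) ?_ ?_ ?_ ?_ ?_
    · -- i maps into target
      intro c hc
      rw [Finset.mem_filter, mem_cliquesOf] at hc
      obtain ⟨⟨hne, hK⟩, hv, hle⟩ := hc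
      have hsub : ∀ w ∈ c.erase v, w ∈ P v := by
        intro w hw
        rw [Finset.mem_erase] at hw
        refine ⟨hK hv (by exact_mod_cast hw.2) (fun h => hw.1 h.symm), ?_⟩
        · exact lt_of_le_of_ne (hle w hw.2) (fun h => hw.1 (hg h))
      beta_reduce
      rcases (Finset.subtype (· ∈ P v) (c.erase v)).eq_empty_or_nonempty with h | h
      · rw [Finset.mem_insert]; exact Or.inl h
      · refine Finset.mem_insert_of_mem ?_
        rw [mem_cliquesOf]
        refine ⟨h, ?_⟩
        intro x hx y hy hxy
        simp only [Finset.mem_coe, Finset.mem_subtype] at hx hy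
        have hx' : (x : V) ∈ c.erase v := hx
        have hy' : (y : V) ∈ c.erase v := hy
        exact hK (Finset.mem_coe.2 (Finset.mem_of_mem_erase hx'))
          (Finset.mem_coe.2 (Finset.mem_of_mem_erase hy'))
          (fun h => hxy (Subtype.ext h))
    · -- j maps into source
      intro s hs
      have hKs : (G.induce (P v)).IsClique (s : Set (P v)) := by
        rcases Finset.mem_insert.1 hs with h | h
        · subst h; simp
        · exact ((mem_cliquesOf _ _).1 h).2
      have hvnot : v ∉ s.map (Function.Embedding.subtype (· ∈ P v)) := by
        rw [Finset.mem_map]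
        rintro ⟨a, _, ha⟩
        have := a.2.1
        simp only [Function.Embedding.coe_subtype] at ha
        rw [ha] at this
        exact G.loopless.irrefl v this
      rw [Finset.mem_filter, mem_cliquesOf]
      refine ⟨⟨⟨v, Finset.mem_insert_self _ _⟩, ?_⟩, Finset.mem_insert_self _ _, ?_⟩
      · -- clique
        rw [Finset.coe_insert]
        refine SimpleGraph.IsClique.insert ?_ ?_
        · intro x hx y hy hxy
          rw [Finset.mem_coe, Finset.mem_map] at hx hy
          obtain ⟨a, ha, rfl⟩ := hx
          obtain ⟨b, hb, rfl⟩ := hy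
          exact hKs (Finset.mem_coe.2 ha) (Finset.mem_coe.2 hb)
            (fun h => hxy (congrArg _ h))
        · intro w hw hne
          rw [Finset.mem_coe, Finset.mem_map] at hw
          obtain ⟨a, _, rfl⟩ := hw
          exact a.2.1
      · intro w hw
        rcases Finset.mem_insert.1 hw with h | h
        · exact h ▸ le_refl _
        · rw [Finset.mem_map] at h
          obtain ⟨a, _, rfl⟩ := h
          exact a.2.2.le
    · -- left inverse
      intro c hc
      rw [Finset.mem_filter, mem_cliquesOf] at hc
      obtain ⟨⟨hne, hK⟩, hv, hle⟩ := hc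
      have hsub : ∀ w ∈ c.erase v, w ∈ P v := by
        intro w hw
        rw [Finset.mem_erase] at hw
        exact ⟨hK hv (Finset.mem_coe.2 (Finset.mem_of_mem_erase (Finset.mem_erase.2 hw)))
            (fun h => hw.1 h.symm),
          lt_of_le_of_ne (hle w hw.2) (fun h => hw.1 (hg h))⟩
      beta_reduce
      rw [Finset.subtype_map, Finset.filter_true_of_mem hsub, Finset.insert_erase hv]
    · -- right inverse
      intro s hs
      have hvnot : v ∉ s.map (Function.Embedding.subtype (· ∈ P v)) := by
        rw [Finset.mem_map]
        rintro ⟨a, _, ha⟩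
        have := a.2.1
        simp only [Function.Embedding.coe_subtype] at ha
        rw [ha] at this
        exact G.loopless.irrefl v this
      beta_reduce
      rw [Finset.erase_insert hvnot]
      ext x
      simp [Finset.mem_subtype, Finset.mem_map, Subtype.ext_iff]
    · -- values
      intro c hc
      rw [Finset.mem_filter, mem_cliquesOf] at hc
      obtain ⟨⟨hne, hK⟩, hv, hle⟩ := hc
      have hsub : ∀ w ∈ c.erase v, w ∈ P v := by
        intro w hw
        rw [Finset.mem_erase] at hw
        exact ⟨hK hv (Finset.mem_coe.2 (Finset.mem_of_mem_erase (Finset.mem_erase.2 hw)))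
            (fun h => hw.1 h.symm),
          lt_of_le_of_ne (hle w hw.2) (fun h => hw.1 (hg h))⟩
      have hcard : (Finset.subtype (· ∈ P v) (c.erase v)).card = (c.erase v).card := by
        rw [← Finset.card_map (Function.Embedding.subtype (· ∈ P v)), Finset.subtype_map,
          Finset.filter_true_of_mem hsub]
      rw [hcard, Finset.card_erase_add_one hv]
  -- global fiberwise decomposition
  rcases isEmpty_or_nonempty V with hV | hV
  · have h1 : cliquesOf G = ∅ := by
      rw [Finset.eq_empty_iff_forall_notMem]
      intro c hc
      obtain ⟨⟨x, _⟩, _⟩ := (mem_cliquesOf G c).1 hc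
      exact IsEmpty.elim hV x
    simp [fgen, h1]
  · inhabit V
    have hfib : ∀ c ∈ cliquesOf G, ∃ w ∈ c, ∀ x ∈ c, g x ≤ g w := by
      intro c hc
      exact c.exists_max_image g ((mem_cliquesOf G c).1 hc).1
    set m : Finset V → V := fun c =>
      if h : c ∈ cliquesOf G then Classical.choose (hfib c h) else default with hm
    have hsum : ∑ v : V, ∑ c ∈ (cliquesOf G).filter (fun c => m c = v), t ^ c.card
        = ∑ c ∈ cliquesOf G, t ^ c.card :=
      Finset.sum_fiberwise_of_maps_to (fun c _ => Finset.mem_univ (m c)) _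
    have hfilt : ∀ v : V, (cliquesOf G).filter (fun c => m c = v)
        = (cliquesOf G).filter (fun c => v ∈ c ∧ ∀ w ∈ c, g w ≤ g v) := by
      intro v
      apply Finset.filter_congr
      intro c hc
      obtain ⟨hmem, hmax⟩ := Classical.choose_spec (hfib c hc)
      have hmc : m c = Classical.choose (hfib c hc) := by rw [hm]; simp [hc]
      constructor
      · rintro rfl
        rw [hmc] at *
        exact ⟨hmem, hmax⟩
      · rintro ⟨hv, hle⟩
        rw [hmc]
        exact hg (le_antisymm (hle _ hmem) (hmax _ hv))
    calc fgen G t = 1 + ∑ c ∈ cliquesOf G, t ^ c.card := rfl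
      _ = 1 + ∑ v : V, ∑ c ∈ (cliquesOf G).filter (fun c => v ∈ c ∧ ∀ w ∈ c, g w ≤ g v),
            t ^ c.card := by
          rw [← hsum]
          congr 1
          exact Finset.sum_congr rfl (fun v _ => by rw [hfilt v])
      _ = 1 + ∑ v : V, t * fgen (G.induce (P v)) t := by
          congr 1
          exact Finset.sum_congr rfl (fun v _ => key v)
      _ = 1 + t * ∑ v : V, fgen (G.induce (P v)) t := by rw [Finset.mul_sum]
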